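/- arXiv:2010.14715 — 4 statements merged into one kernel-verified Lean document; each statement's English description precedes it below -/
import Mathlib

section
/- Let (𝕏, d) be a complete separable metric space with a distinguished point 0, equipped with a scaling action (T_a)_{a>0}. Let ξ be a random element of 𝕏 which is non-zero. If a', a'' > 0 and T_{a'}(ξ) and T_{a''}(ξ) have the same distribution (equal pushforward laws on 𝕏), then a' = a''. -/
open MeasureTheory Filter Topology

/-- A scaling action on a metric space `𝕏` with distinguished point `z`:
a family `T a : 𝕏 → 𝕏`, `a ∈ (0,∞)`, which is a multiplicative group action (i),(ii),
jointly (sequentially) continuous (iii), radially monotone (iv), and such that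
`dist (T a x) z → 0` as `a → 0⁺` (v). -/
structure ScalingAction (𝕏 : Type*) [MetricSpace 𝕏] (z : 𝕏) where
  T : ℝ → 𝕏 → 𝕏
  comp : ∀ ⦃a b : ℝ⦄, 0 < a → 0 < b → ∀ x, T a (T b x) = T (a * b) x
  one_eq : ∀ x, T 1 x = x
  map_zero : ∀ ⦃a : ℝ⦄, 0 < a → T a z = z
  cont : ∀ ⦃a : ℝ⦄, 0 < a → ∀ (x : 𝕏) (an : ℕ → ℝ) (xn : ℕ → 𝕏),
    Tendsto an atTop (𝓝 a) → Tendsto xn atTop (𝓝 x) →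
      Tendsto (fun n => T (an n) (xn n)) atTop (𝓝 (T a x))
  mono : ∀ ⦃a b : ℝ⦄, 0 < a → a < b → ∀ ⦃x : 𝕏⦄, x ≠ z →
    dist (T a x) z < dist (T b x) z
  tendsto_zero : ∀ x : 𝕏, Tendsto (fun a => T a x) (𝓝[>] (0 : ℝ)) (𝓝 z)

/-!
If `a < b`, radial monotonicity gives `d(T_a ξ, 0) ≤ d(T_b ξ, 0)` pointwise, strictly where
`ξ ≠ 0`. Two real random variables that are ordered pointwise and have the same law agree
almost surely (compare the expectations of a bounded strictly increasing function of them,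
say `arctan`), so `ξ = 0` almost surely.
-/

open Real in
theorem ae_eq_of_ae_le_of_map_eq {Ω : Type*} [MeasurableSpace Ω] {μ : Measure Ω}
    [IsFiniteMeasure μ] {X Y : Ω → ℝ} (hX : AEMeasurable X μ) (hY : AEMeasurable Y μ)
    (hXY : X ≤ᵐ[μ] Y) (hmap : μ.map X = μ.map Y) : X =ᵐ[μ] Y := by
  have integrable_arctan_comp {Z : Ω → ℝ} (hZ : AEMeasurable Z μ) :
      Integrable (fun ω ↦ arctan (Z ω)) μ :=
    .of_bound (continuous_arctan.measurable.comp_aemeasurable hZ).aestronglyMeasurable (π / 2)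
      (.of_forall fun ω ↦ by
        rw [norm_eq_abs, abs_le]
        exact ⟨(arctan_mem_Ioo _).1.le, (arctan_mem_Ioo _).2.le⟩)
  have integral_eq : ∫ ω, arctan (X ω) ∂μ = ∫ ω, arctan (Y ω) ∂μ := by
    rw [← integral_map hX continuous_arctan.aestronglyMeasurable,
      ← integral_map hY continuous_arctan.aestronglyMeasurable, hmap]
  have arctan_ae_eq := (integral_eq_iff_of_ae_le (integrable_arctan_comp hX)
    (integrable_arctan_comp hY) (hXY.mono fun ω h ↦ arctan_mono h)).1 integral_eq
  exact arctan_ae_eq.mono fun ω h ↦ arctan_injective h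

namespace ScalingAction

variable {𝕏 : Type*} [MetricSpace 𝕏] {z : 𝕏} (S : ScalingAction 𝕏 z)

theorem continuous_T {a : ℝ} (ha : 0 < a) : Continuous (S.T a) :=
  continuous_iff_seqContinuous.2 fun _ _ hx ↦ S.cont ha _ _ _ tendsto_const_nhds hx

theorem dist_T_le_dist_T {a b : ℝ} (ha : 0 < a) (hab : a ≤ b) (x : 𝕏) :
    dist (S.T a x) z ≤ dist (S.T b x) z := by
  rcases hab.eq_or_lt with rfl | hab
  · rfl
  rcases eq_or_ne x z with rfl | hx
  · rw [S.map_zero ha, S.map_zero (ha.trans hab)]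
  · exact (S.mono ha hab hx).le

theorem eq_of_dist_T_eq_dist_T {a b : ℝ} (ha : 0 < a) (hab : a < b) {x : 𝕏}
    (h : dist (S.T a x) z = dist (S.T b x) z) : x = z := by
  by_contra hx
  exact (S.mono ha hab hx).ne h

theorem ae_eq_of_map_T_eq [MeasurableSpace 𝕏] [BorelSpace 𝕏] {Ω : Type*} [MeasurableSpace Ω]
    {μ : Measure Ω} [IsFiniteMeasure μ] {ξ : Ω → 𝕏} (hξ : Measurable ξ) {a b : ℝ}
    (ha : 0 < a) (hab : a < b)
    (h : μ.map (fun ω ↦ S.T a (ξ ω)) = μ.map (fun ω ↦ S.T b (ξ ω))) :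
    ∀ᵐ ω ∂μ, ξ ω = z := by
  have measurable_dist : Measurable fun x : 𝕏 ↦ dist x z :=
    (continuous_id.dist continuous_const).measurable
  have measurable_T_comp (c : ℝ) (hc : 0 < c) : Measurable fun ω ↦ S.T c (ξ ω) :=
    (S.continuous_T hc).measurable.comp hξ
  have measurable_dist_T (c : ℝ) (hc : 0 < c) : Measurable fun ω ↦ dist (S.T c (ξ ω)) z :=
    measurable_dist.comp (measurable_T_comp c hc)
  have dist_map_eq : μ.map (fun ω ↦ dist (S.T a (ξ ω)) z) =
      μ.map (fun ω ↦ dist (S.T b (ξ ω)) z) := by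
    have := congrArg (Measure.map fun x ↦ dist x z) h
    rwa [Measure.map_map measurable_dist (measurable_T_comp a ha),
      Measure.map_map measurable_dist (measurable_T_comp b (ha.trans hab))] at this
  have := ae_eq_of_ae_le_of_map_eq (measurable_dist_T a ha).aemeasurable
    (measurable_dist_T b (ha.trans hab)).aemeasurable
    (.of_forall fun ω ↦ S.dist_T_le_dist_T ha hab.le (ξ ω)) dist_map_eq
  exact this.mono fun ω ↦ S.eq_of_dist_T_eq_dist_T ha hab

end ScalingAction

theorem scalingAction_law_eq_imp_scale_eq_general {𝕏 : Type*} [MetricSpace 𝕏]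
    [MeasurableSpace 𝕏] [BorelSpace 𝕏]
    (z : 𝕏) (S : ScalingAction 𝕏 z)
    {Ω : Type*} [MeasurableSpace Ω] (P : Measure Ω) [IsProbabilityMeasure P]
    (ξ : Ω → 𝕏) (hξ : Measurable ξ) (hnz : P {ω | ξ ω = z} < 1)
    (a' a'' : ℝ) (ha' : 0 < a') (ha'' : 0 < a'')
    (h : P.map (fun ω => S.T a' (ξ ω)) = P.map (fun ω => S.T a'' (ξ ω))) :
    a' = a'' := by
  have not_ae_eq_zero : ¬ ∀ᵐ ω ∂P, ξ ω = z := fun hae ↦ hnz.ne ((mem_ae_iff_prob_eq_one (hξ (measurableSet_singleton z))).1 hae)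
  rcases lt_trichotomy a' a'' with hlt | heq | hgt
  · exact absurd (S.ae_eq_of_map_T_eq hξ ha' hlt h) not_ae_eq_zero
  · exact heq
  · exact absurd (S.ae_eq_of_map_T_eq hξ ha'' hgt h.symm) not_ae_eq_zero

/-- If `ξ` is a non-zero random element of a complete separable metric space `𝕏` carrying a
scaling action, and `T a' ξ` and `T a'' ξ` have the same law for `a', a'' > 0`, then
`a' = a''`. -/
theorem scalingAction_law_eq_imp_scale_eq {𝕏 : Type*} [MetricSpace 𝕏] [CompleteSpace 𝕏]
    [TopologicalSpace.SeparableSpace 𝕏] [MeasurableSpace 𝕏] [BorelSpace 𝕏]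
    (z : 𝕏) (S : ScalingAction 𝕏 z)
    {Ω : Type*} [MeasurableSpace Ω] (P : Measure Ω) [IsProbabilityMeasure P]
    (ξ : Ω → 𝕏) (hξ : Measurable ξ) (hnz : P {ω | ξ ω = z} < 1)
    (a' a'' : ℝ) (ha' : 0 < a') (ha'' : 0 < a'')
    (h : P.map (fun ω => S.T a' (ξ ω)) = P.map (fun ω => S.T a'' (ξ ω))) :
    a' = a'' :=
  scalingAction_law_eq_imp_scale_eq_general z S P ξ hξ hnz a' a'' ha' ha'' h
end

section
/- Let V be a complex Hilbert space and H : V → V a bounded linear operator. For c > 0 write c^H := exp((log c)·H), the operator exponential of (log c)H. Assume: (a) every z in the spectrum of H satisfies Re(z) > 0; and (b) Re⟨Hx, x⟩ > 0 for every x ≠ 0. Then for every x ≠ 0 the function c ↦ ‖c^H x‖ is strictly increasing on (0, ∞), and ‖c^H x‖ → 0 as c → 0⁺. -/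
open Filter Topology NormedSpace

/-!
Write `F t = exp (t • H) x`. Since `F' = H F` and `exp (t • H)` is invertible,
`d/dt ‖F t‖² = 2 Re ⟪H (F t), F t⟫ > 0`, so `‖F t‖` is strictly increasing in `t = log c`.
By the spectral mapping property of `exp`, `exp (-H)` has spectral radius `< 1`, so Gelfand's
formula gives `‖exp (-H) ^ n‖ → 0`. Hence `‖F (-n)‖ → 0`, and by monotonicity `‖F t‖ → 0` as
`t → -∞`, i.e. as `c → 0⁺`.
-/

theorem Complex.exists_mem_frontier_forall_re_le {K : Set ℂ} (hK : IsCompact K)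
    (hne : K.Nonempty) : ∃ z ∈ frontier K, ∀ w ∈ K, w.re ≤ z.re := by
  obtain ⟨z, hzK, hmax⟩ := hK.exists_isMaxOn hne Complex.continuous_re.continuousOn
  refine ⟨z, ?_, isMaxOn_iff.mp hmax⟩
  rw [hK.isClosed.frontier_eq]
  refine ⟨hzK, fun hz => ?_⟩
  obtain ⟨ε, hε, hball⟩ := Metric.isOpen_iff.mp isOpen_interior z hz
  have hmem : z + (ε / 2 : ℝ) ∈ K := interior_subset <| hball <| by
    simp [abs_of_pos hε, hε]
  have hre := isMaxOn_iff.mp hmax _ hmem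
  simp only [Complex.add_re, Complex.ofReal_re] at hre
  linarith

theorem spectrum_exp_subset_image_exp {A : Type*} [NormedCommRing A] [NormedAlgebra ℂ A]
    [CompleteSpace A] (a : A) : spectrum ℂ (exp a) ⊆ Complex.exp '' spectrum ℂ a := by
  let +nondep : NormedAlgebra ℚ A := .restrictScalars ℚ ℂ A
  intro μ hμ
  obtain ⟨χ, rfl⟩ := WeakDual.CharacterSpace.mem_spectrum_iff_exists.mp hμ
  refine ⟨χ a, AlgHom.apply_mem_spectrum χ a, ?_⟩
  rw [map_exp χ (map_continuous χ), Complex.exp_eq_exp_ℂ]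

section BanachAlgebra

variable {A : Type*} [NormedRing A] [NormedAlgebra ℂ A] [CompleteSpace A]

theorem exists_mem_spectrum_forall_norm_le_exp_re [Nontrivial A] (a : A) :
    ∃ z ∈ spectrum ℂ a, ∀ μ ∈ spectrum ℂ (exp a), ‖μ‖ ≤ Real.exp z.re := by
  let S := Algebra.elemental ℂ a
  -- `exp` has the spectral mapping property only in a commutative algebra. The spectrum of `a` in
  -- `S` may be larger than `σ(a)`, but its rightmost point lies on its frontier, hence in `σ(a)`.
  let : NormedCommRing S := { (inferInstance : NormedRing S) with mul_comm := mul_comm }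
  let a' : S := ⟨a, Algebra.elemental.self_mem ℂ a⟩
  obtain ⟨z, hz, hmax⟩ := Complex.exists_mem_frontier_forall_re_le (spectrum.isCompact a')
    (spectrum.nonempty a')
  refine ⟨z, Subalgebra.frontier_spectrum S a' hz, fun μ hμ => ?_⟩
  have hexp : ((exp a' : S) : A) = exp a := by
    let +nondep : NormedAlgebra ℚ A := .restrictScalars ℚ ℂ A
    let +nondep : NormedAlgebra ℚ S := .restrictScalars ℚ ℂ S
    exact map_exp (Subalgebra.val S) continuous_subtype_val a'
  obtain ⟨w, hw, rfl⟩ := spectrum_exp_subset_image_exp a'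
    (spectrum.subset_subalgebra (exp a') (hexp ▸ hμ))
  rw [Complex.norm_exp]
  exact Real.exp_le_exp.mpr (hmax w hw)

theorem spectralRadius_exp_lt_one {a : A} (ha : ∀ z ∈ spectrum ℂ a, z.re < 0) :
    spectralRadius ℂ (exp a) < 1 := by
  rcases subsingleton_or_nontrivial A with _ | _
  · simp [spectrum.SpectralRadius.of_subsingleton]
  obtain ⟨z, hz, hbound⟩ := exists_mem_spectrum_forall_norm_le_exp_re a
  calc spectralRadius ℂ (exp a) ≤ ENNReal.ofReal (Real.exp z.re) :=
        iSup₂_le fun μ hμ =>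
          (ofReal_norm μ).symm.trans_le (ENNReal.ofReal_le_ofReal (hbound μ hμ))
    _ < 1 := by simpa using ha z hz

theorem tendsto_norm_pow_of_spectralRadius_lt_one {a : A} (ha : spectralRadius ℂ a < 1) :
    Tendsto (fun n : ℕ => ‖a ^ n‖) atTop (𝓝 0) := by
  obtain ⟨r, hρr, hr1⟩ := exists_between ha
  have hle : ∀ᶠ n : ℕ in atTop, (‖a ^ n‖₊ : ENNReal) ≤ r ^ n := by
    filter_upwards [(spectrum.pow_nnnorm_pow_one_div_tendsto_nhds_spectralRadius a)
      |>.eventually_lt_const hρr, eventually_gt_atTop 0] with n hn hn0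
    rw [one_div, ENNReal.rpow_inv_lt_iff (by positivity), ENNReal.rpow_natCast] at hn
    exact hn.le
  have h := tendsto_of_tendsto_of_tendsto_of_le_of_le' tendsto_const_nhds
    (ENNReal.tendsto_pow_atTop_nhds_zero_of_lt_one hr1) (.of_forall fun _ => zero_le) hle
  simpa [Function.comp_def] using (ENNReal.tendsto_toReal ENNReal.zero_ne_top).comp h

theorem tendsto_norm_exp_neg_pow {a : A} (ha : ∀ z ∈ spectrum ℂ a, 0 < z.re) :
    Tendsto (fun n : ℕ => ‖exp (-a) ^ n‖) atTop (𝓝 0) := by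
  refine tendsto_norm_pow_of_spectralRadius_lt_one (spectralRadius_exp_lt_one fun z hz => ?_)
  rw [← spectrum.neg_eq, Set.mem_neg] at hz
  simpa using ha _ hz

end BanachAlgebra

section BanachSpace

variable {E : Type*} [NormedAddCommGroup E] [NormedSpace ℂ E] [CompleteSpace E]

theorem exp_apply_ne_zero (A : E →L[ℂ] E) {x : E} (hx : x ≠ 0) : exp A x ≠ 0 := by
  let +nondep : NormedAlgebra ℚ (E →L[ℂ] E) := .restrictScalars ℚ ℂ _
  rw [← map_zero (exp A)]
  exact (ContinuousLinearMap.isUnit_iff_bijective.mp (isUnit_exp A)).injective.ne hx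

theorem hasDerivAt_exp_smul_apply (A : E →L[ℂ] E) (x : E) (t : ℝ) :
    HasDerivAt (fun t : ℝ => exp ((t : ℂ) • A) x) (A (exp ((t : ℂ) • A) x)) t := by
  simp_rw [Complex.coe_smul]
  exact ((ContinuousLinearMap.apply ℂ E x).restrictScalars ℝ).hasFDerivAt.comp_hasDerivAt t
    (hasDerivAt_exp_smul_const' A t)

end BanachSpace

section HilbertSpace

variable {V : Type*} [NormedAddCommGroup V] [InnerProductSpace ℂ V] [CompleteSpace V]

theorem hasDerivAt_norm_sq_exp_smul_apply (H : V →L[ℂ] V) (x : V) (t : ℝ) :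
    HasDerivAt (fun t : ℝ => ‖exp ((t : ℂ) • H) x‖ ^ 2)
      (2 * (inner ℂ (H (exp ((t : ℂ) • H) x)) (exp ((t : ℂ) • H) x)).re) t := by
  let _ : InnerProductSpace ℝ V := .complexToReal
  have h := (hasDerivAt_exp_smul_apply H x t).norm_sq
  rwa [real_inner_eq_re_inner ℂ, inner_re_symm] at h

theorem strictMono_norm_exp_smul_apply {H : V →L[ℂ] V}
    (hpos : ∀ x : V, x ≠ 0 → 0 < (inner ℂ (H x) x : ℂ).re) {x : V} (hx : x ≠ 0) :
    StrictMono fun t : ℝ => ‖exp ((t : ℂ) • H) x‖ := by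
  have hsq : StrictMono fun t : ℝ => ‖exp ((t : ℂ) • H) x‖ ^ 2 :=
    strictMono_of_hasDerivAt_pos (hasDerivAt_norm_sq_exp_smul_apply H x) fun t =>
      mul_pos two_pos (hpos _ (exp_apply_ne_zero _ hx))
  exact fun s t hst => lt_of_pow_lt_pow_left₀ 2 (norm_nonneg _) (hsq hst)

theorem tendsto_norm_exp_smul_apply_atBot {H : V →L[ℂ] V}
    (hspec : ∀ z ∈ spectrum ℂ H, 0 < z.re)
    (hpos : ∀ x : V, x ≠ 0 → 0 < (inner ℂ (H x) x : ℂ).re) {x : V} (hx : x ≠ 0) :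
    Tendsto (fun t : ℝ => ‖exp ((t : ℂ) • H) x‖) atBot (𝓝 0) := by
  have hinf := tendsto_atBot_ciInf (strictMono_norm_exp_smul_apply hpos hx).monotone
    ⟨0, by rintro _ ⟨t, rfl⟩; positivity⟩
  have hseq : Tendsto (fun n : ℕ => ‖exp (((-n : ℝ) : ℂ) • H) x‖) atTop (𝓝 0) := by
    refine squeeze_zero (fun _ => norm_nonneg _) (fun n => ?_)
      (by simpa using (tendsto_norm_exp_neg_pow hspec).mul_const ‖x‖)
    let +nondep : NormedAlgebra ℚ (V →L[ℂ] V) := .restrictScalars ℚ ℂ _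
    rw [show ((-n : ℝ) : ℂ) • H = n • -H by
      rw [Complex.ofReal_neg, Complex.ofReal_natCast, neg_smul, smul_neg, Nat.cast_smul_eq_nsmul],
      exp_nsmul]
    exact (exp (-H) ^ n).le_opNorm x
  rwa [tendsto_nhds_unique
    (hinf.comp (tendsto_neg_atTop_atBot.comp tendsto_natCast_atTop_atTop)) hseq] at hinf

end HilbertSpace

/-- Let `H` be a bounded linear operator on a complex Hilbert space `V` with
`Re z > 0` for every `z` in the spectrum of `H`, and `Re ⟪H x, x⟫ > 0` for every `x ≠ 0`.
Writing `c ^ H := exp ((log c) • H)` for `c > 0`, the map `c ↦ ‖c ^ H x‖` is strictly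
increasing on `(0, ∞)` and tends to `0` as `c → 0⁺`, for every `x ≠ 0`. -/
theorem operator_scaling_norm_strictMono_and_tendsto_zero
    {V : Type*} [NormedAddCommGroup V] [InnerProductSpace ℂ V] [CompleteSpace V]
    (H : V →L[ℂ] V)
    (hspec : ∀ z ∈ spectrum ℂ H, 0 < z.re)
    (hpos : ∀ x : V, x ≠ 0 → 0 < (inner ℂ (H x) x : ℂ).re) :
    ∀ x : V, x ≠ 0 →
      StrictMonoOn (fun c : ℝ => ‖(NormedSpace.exp ((Real.log c : ℂ) • H)) x‖)
        (Set.Ioi (0 : ℝ)) ∧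
      Tendsto (fun c : ℝ => ‖(NormedSpace.exp ((Real.log c : ℂ) • H)) x‖)
        (𝓝[>] (0 : ℝ)) (𝓝 0) := by
  intro x hx
  exact ⟨fun c hc c' _ hlt => strictMono_norm_exp_smul_apply hpos hx (Real.log_lt_log hc hlt),
    (tendsto_norm_exp_smul_apply_atBot hspec hpos hx).comp Real.tendsto_log_nhdsGT_zero⟩
end

section
/- (Zero-one law for squared Gaussian sums.) Let (Z_j)_{j∈ℕ} be real random variables on a probability space that are jointly centered Gaussian, with σ_j² := E[Z_j²]. Let ξ := Σ_{j∈ℕ} Z_j², a random variable with values in [0, ∞]. Then the following are equivalent: (i) Σ_{j∈ℕ} σ_j² < ∞; (ii) P(ξ < ∞) = 1; (iii) P(ξ < ∞) > 0. -/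
open MeasureTheory ProbabilityTheory Filter
open scoped ENNReal NNReal

/-- The family `Z` is jointly centered Gaussian: every finite real linear combination is a
centered (possibly degenerate) Gaussian random variable. -/
def IsJointlyCenteredGaussian {Ω : Type*} [MeasurableSpace Ω] (P : Measure Ω)
    (Z : ℕ → Ω → ℝ) : Prop :=
  ∀ (s : Finset ℕ) (c : ℕ → ℝ), ∃ v : ℝ≥0,
    P.map (fun ω => ∑ j ∈ s, c j * Z j ω) = gaussianReal 0 v

/-!
(i) ⇒ (ii) is monotone convergence: `E ξ = Σ σ_j²`. For (iii) ⇒ (i), if `ξ ≤ n` with probability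
`ε > 0`, then `E exp (-Σ_{j ∈ s} Z_j²) ≥ e⁻ⁿ ε` for every finite `s`. Hölder's inequality with
weights `σ_j² / t`, where `t = Σ_{j ∈ s} σ_j²`, bounds the same expectation by the Laplace transform
`E exp (-(t / σ_j²) Z_j²) = (1 + 2t)^(-1/2)` of a single coordinate, whatever the dependence
between the `Z_j`. Hence `t` is bounded uniformly in `s`.
-/

open Real

lemma lintegral_sq_gaussianReal (v : ℝ≥0) :
    ∫⁻ x, ENNReal.ofReal (x ^ 2) ∂gaussianReal 0 v = v := by
  have hint : Integrable (fun x : ℝ => x ^ 2) (gaussianReal 0 v) :=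
    (memLp_id_gaussianReal 2).integrable_sq
  rw [← ofReal_integral_eq_lintegral_ofReal hint (ae_of_all _ fun x => sq_nonneg x),
    ← ENNReal.ofReal_coe_nnreal, ← variance_id_gaussianReal (μ := 0),
    variance_of_integral_eq_zero aemeasurable_id integral_id_gaussianReal]
  rfl

lemma lintegral_sq_eq_of_map_eq_gaussianReal {Ω : Type*} [MeasurableSpace Ω] {P : Measure Ω}
    {X : Ω → ℝ} {v : ℝ≥0} (hX : AEMeasurable X P) (hmap : P.map X = gaussianReal 0 v) :
    ∫⁻ ω, ENNReal.ofReal (X ω ^ 2) ∂P = v := by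
  rw [← lintegral_map' (f := fun x => ENNReal.ofReal (x ^ 2)) (by fun_prop) hX, hmap,
    lintegral_sq_gaussianReal]

lemma lintegral_exp_neg_mul_sq_gaussianReal (v : ℝ≥0) {c : ℝ} (hc : 0 ≤ c) :
    ∫⁻ x, ENNReal.ofReal (exp (-(c * x ^ 2))) ∂gaussianReal 0 v
      = ENNReal.ofReal (√(1 + 2 * c * v))⁻¹ := by
  rcases eq_or_ne v 0 with rfl | hv
  · simp [gaussianReal_zero_var, lintegral_dirac]
  have hint : Integrable (fun x : ℝ => exp (-(c * x ^ 2))) (gaussianReal 0 v) := by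
    refine Integrable.of_bound (by fun_prop) 1 (ae_of_all _ fun x => ?_)
    rw [Real.norm_of_nonneg (exp_pos _).le, exp_le_one_iff, neg_nonpos]
    positivity
  have hdensity (x : ℝ) : gaussianPDFReal 0 v x • exp (-(c * x ^ 2))
      = (√(2 * π * v))⁻¹ * exp (-(c + (2 * (v : ℝ))⁻¹) * x ^ 2) := by
    rw [gaussianPDFReal, smul_eq_mul, mul_assoc, ← exp_add]
    congr 2
    field_simp
    ring
  rw [← ofReal_integral_eq_lintegral_ofReal hint (ae_of_all _ fun x => (exp_pos _).le),
    integral_gaussianReal_eq_integral_smul hv]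
  simp_rw [hdensity]
  rw [integral_const_mul, integral_gaussian, ← sqrt_inv, ← sqrt_inv, ← sqrt_mul (by positivity)]
  congr 2
  field_simp
  ring

lemma exists_nat_measure_setOf_le_pos {α : Type*} [MeasurableSpace α] {μ : Measure α}
    {f : α → ℝ≥0∞} (h : 0 < μ {x | f x < ⊤}) : ∃ n : ℕ, 0 < μ {x | f x ≤ n} := by
  by_contra! hcon
  have hcover : {x | f x < ⊤} ⊆ ⋃ n : ℕ, {x | f x ≤ n} := fun x hx =>
    Set.mem_iUnion.2 ((ENNReal.exists_nat_gt hx.ne).imp fun _ hn => hn.le)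
  exact h.ne' <|
    measure_mono_null hcover (measure_iUnion_null fun n => nonpos_iff_eq_zero.1 (hcon n))

lemma measure_tsum_lt_top_eq_one {α ι : Type*} [Countable ι] [MeasurableSpace α] {μ : Measure α}
    [IsProbabilityMeasure μ] {f : ι → α → ℝ≥0∞} (hf : ∀ i, AEMeasurable (f i) μ)
    (h : ∑' i, ∫⁻ x, f i x ∂μ < ⊤) : μ {x | ∑' i, f i x < ⊤} = 1 := by
  have hsum : AEMeasurable (fun x => ∑' i, f i x) μ := AEMeasurable.tsum hf
  rw [← mem_ae_iff_prob_eq_one₀ (nullMeasurableSet_lt hsum aemeasurable_const)]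
  exact ae_lt_top' hsum (lintegral_tsum hf ▸ h.ne)

section

variable {Ω ι : Type*} [MeasurableSpace Ω] {P : Measure Ω}
  {Z : ι → Ω → ℝ} {v : ι → ℝ≥0}

lemma lintegral_exp_neg_sum_sq_le_of_forall_ne_zero [IsProbabilityMeasure P]
    (hZ : ∀ j, AEMeasurable (Z j) P) (hmap : ∀ j, P.map (Z j) = gaussianReal 0 (v j))
    {s : Finset ι} (hs : ∀ j ∈ s, v j ≠ 0) :
    ∫⁻ ω, ENNReal.ofReal (exp (-∑ j ∈ s, Z j ω ^ 2)) ∂P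
      ≤ ENNReal.ofReal (√(1 + 2 * ∑ j ∈ s, (v j : ℝ)))⁻¹ := by
  rcases s.eq_empty_or_nonempty with rfl | hne
  · simp
  set t := ∑ j ∈ s, (v j : ℝ)
  have hv (j) (hj : j ∈ s) : (0 : ℝ) < v j := by have := hs j hj; positivity
  have ht : 0 < t := Finset.sum_pos hv hne
  set r := (√(1 + 2 * t))⁻¹
  -- Hölder with weights `v j / t`; every rescaled factor has Laplace transform `r`
  set f : ι → Ω → ℝ≥0∞ := fun j ω => ENNReal.ofReal (exp (-(t / v j * Z j ω ^ 2)))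
  have hweights : ∑ j ∈ s, (v j : ℝ) / t = 1 := by rw [← Finset.sum_div, div_self ht.ne']
  have hfactor (ω) : ENNReal.ofReal (exp (-∑ j ∈ s, Z j ω ^ 2))
      = ∏ j ∈ s, f j ω ^ ((v j : ℝ) / t) := by
    rw [← Finset.sum_neg_distrib, exp_sum, ENNReal.ofReal_prod_of_nonneg fun j _ => (exp_pos _).le]
    refine Finset.prod_congr rfl fun j hj => ?_
    rw [ENNReal.ofReal_rpow_of_pos (exp_pos _), ← exp_mul]
    have := (hv j hj).ne'
    congr 2
    field_simp
  have hf (j) (hj : j ∈ s) : ∫⁻ ω, f j ω ∂P = ENNReal.ofReal r := by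
    rw [← lintegral_map' (f := fun x => ENNReal.ofReal (exp (-(t / v j * x ^ 2))))
      (by fun_prop : Measurable _).aemeasurable (hZ j), hmap j,
      lintegral_exp_neg_mul_sq_gaussianReal _ (div_pos ht (hv j hj)).le,
      mul_assoc, div_mul_cancel₀ _ (hv j hj).ne']
  calc ∫⁻ ω, ENNReal.ofReal (exp (-∑ j ∈ s, Z j ω ^ 2)) ∂P
      = ∫⁻ ω, ∏ j ∈ s, f j ω ^ ((v j : ℝ) / t) ∂P := lintegral_congr hfactor
    _ ≤ ∏ j ∈ s, (∫⁻ ω, f j ω ∂P) ^ ((v j : ℝ) / t) :=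
      ENNReal.lintegral_prod_norm_pow_le s (fun j _ => by fun_prop) hweights
        fun j hj => (div_pos (hv j hj) ht).le
    _ = ENNReal.ofReal r := by
      have hr : 0 < r := by positivity
      rw [Finset.prod_congr rfl fun j hj => by rw [hf j hj, ENNReal.ofReal_rpow_of_pos hr],
        ← ENNReal.ofReal_prod_of_nonneg fun j _ => by positivity, ← rpow_sum_of_pos hr,
        hweights, rpow_one]

lemma lintegral_exp_neg_sum_sq_le [IsProbabilityMeasure P] (hZ : ∀ j, AEMeasurable (Z j) P)
    (hmap : ∀ j, P.map (Z j) = gaussianReal 0 (v j)) (s : Finset ι) :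
    ∫⁻ ω, ENNReal.ofReal (exp (-∑ j ∈ s, Z j ω ^ 2)) ∂P
      ≤ ENNReal.ofReal (√(1 + 2 * ∑ j ∈ s, (v j : ℝ)))⁻¹ := by
  classical
  set s' := s.filter (v · ≠ 0)
  have hsum : ∑ j ∈ s', (v j : ℝ) = ∑ j ∈ s, (v j : ℝ) :=
    Finset.sum_filter_of_ne fun j _ h => by exact_mod_cast h
  calc ∫⁻ ω, ENNReal.ofReal (exp (-∑ j ∈ s, Z j ω ^ 2)) ∂P
      ≤ ∫⁻ ω, ENNReal.ofReal (exp (-∑ j ∈ s', Z j ω ^ 2)) ∂P :=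
        lintegral_mono fun ω => ENNReal.ofReal_le_ofReal <| exp_le_exp.2 <| neg_le_neg <|
          Finset.sum_le_sum_of_subset_of_nonneg (Finset.filter_subset _ _) fun _ _ _ => sq_nonneg _
    _ ≤ ENNReal.ofReal (√(1 + 2 * ∑ j ∈ s, (v j : ℝ)))⁻¹ :=
        hsum ▸ lintegral_exp_neg_sum_sq_le_of_forall_ne_zero hZ hmap
          fun j hj => (Finset.mem_filter.1 hj).2

lemma ofReal_exp_neg_mul_measure_le_lintegral (hZ : ∀ j, AEMeasurable (Z j) P) (s : Finset ι)
    (n : ℕ) :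
    ENNReal.ofReal (exp (-n)) * P {ω | ∑' j, ENNReal.ofReal (Z j ω ^ 2) ≤ n}
      ≤ ∫⁻ ω, ENNReal.ofReal (exp (-∑ j ∈ s, Z j ω ^ 2)) ∂P := by
  refine le_trans (mul_le_mul_of_nonneg_left (measure_mono fun ω hω => ?_) zero_le)
    (mul_meas_ge_le_lintegral₀ (by fun_prop) _)
  have hsum : ENNReal.ofReal (∑ j ∈ s, Z j ω ^ 2) ≤ n := by
    rw [ENNReal.ofReal_sum_of_nonneg fun j _ => sq_nonneg _]
    exact (ENNReal.sum_le_tsum s).trans hω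
  rw [← ENNReal.ofReal_natCast, ENNReal.ofReal_le_ofReal_iff (Nat.cast_nonneg n)] at hsum
  exact ENNReal.ofReal_le_ofReal (exp_le_exp.2 (neg_le_neg hsum))

lemma tsum_coe_lt_top_of_measure_tsum_sq_lt_top_pos [IsProbabilityMeasure P]
    (hZ : ∀ j, AEMeasurable (Z j) P) (hmap : ∀ j, P.map (Z j) = gaussianReal 0 (v j))
    (h : 0 < P {ω | ∑' j, ENNReal.ofReal (Z j ω ^ 2) < ⊤}) : ∑' j, (v j : ℝ≥0∞) < ⊤ := by
  obtain ⟨n, hn⟩ := exists_nat_measure_setOf_le_pos h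
  set A := {ω | ∑' j, ENNReal.ofReal (Z j ω ^ 2) ≤ n}
  set δ := exp (-n) * (P A).toReal
  have hδ : 0 < δ := mul_pos (exp_pos _) (ENNReal.toReal_pos hn.ne' (measure_ne_top _ _))
  have hbound (s : Finset ι) : ∑ j ∈ s, (v j : ℝ) ≤ (δ⁻¹ ^ 2 - 1) / 2 := by
    have hδle : δ ≤ (√(1 + 2 * ∑ j ∈ s, (v j : ℝ)))⁻¹ := by
      rw [← ENNReal.ofReal_le_ofReal_iff (by positivity)]
      calc ENNReal.ofReal δ = ENNReal.ofReal (exp (-n)) * P A := by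
            rw [ENNReal.ofReal_mul (exp_pos _).le, ENNReal.ofReal_toReal (measure_ne_top _ _)]
        _ ≤ _ := ofReal_exp_neg_mul_measure_le_lintegral hZ s n
        _ ≤ _ := lintegral_exp_neg_sum_sq_le hZ hmap s
    have hsq := (sqrt_le_left (by positivity)).1 ((le_inv_comm₀ hδ (by positivity)).1 hδle)
    linarith
  have hsummable : Summable v :=
    NNReal.summable_coe.1 (summable_of_sum_le (fun j => (v j).coe_nonneg) hbound)
  exact (ENNReal.tsum_coe_ne_top_iff_summable.2 hsummable).lt_top

end

lemma IsJointlyCenteredGaussian.exists_map_eq_gaussianReal {Ω : Type*} [MeasurableSpace Ω]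
    {P : Measure Ω} {Z : ℕ → Ω → ℝ} (h : IsJointlyCenteredGaussian P Z) (j : ℕ) :
    ∃ v : ℝ≥0, P.map (Z j) = gaussianReal 0 v := by
  obtain ⟨v, hv⟩ := h {j} 1
  exact ⟨v, by simpa using hv⟩

/-- Zero-one law for squared Gaussian sums: for a jointly centered Gaussian family `(Z j)`
with `σ j ^ 2 = E[Z j ^ 2]` and `ξ = Σ_j Z j ^ 2 ∈ [0,∞]`, the conditions
(i) `Σ_j σ j ^ 2 < ∞`, (ii) `P(ξ < ∞) = 1` and (iii) `P(ξ < ∞) > 0` are equivalent. -/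
theorem gaussian_squared_sum_zero_one_law {Ω : Type*} [MeasurableSpace Ω]
    (P : Measure Ω) [IsProbabilityMeasure P]
    (Z : ℕ → Ω → ℝ) (hmeas : ∀ j, Measurable (Z j))
    (hgauss : IsJointlyCenteredGaussian P Z) :
    ((∑' j, ∫⁻ ω, ENNReal.ofReal ((Z j ω) ^ 2) ∂P) < ⊤ ↔
        P {ω | (∑' j, ENNReal.ofReal ((Z j ω) ^ 2)) < ⊤} = 1) ∧
      (P {ω | (∑' j, ENNReal.ofReal ((Z j ω) ^ 2)) < ⊤} = 1 ↔
        0 < P {ω | (∑' j, ENNReal.ofReal ((Z j ω) ^ 2)) < ⊤}) := by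
  choose v hv using hgauss.exists_map_eq_gaussianReal
  have hZ (j : ℕ) : AEMeasurable (Z j) P := (hmeas j).aemeasurable
  have h_i_ii : (∑' j, ∫⁻ ω, ENNReal.ofReal ((Z j ω) ^ 2) ∂P) < ⊤ →
      P {ω | (∑' j, ENNReal.ofReal ((Z j ω) ^ 2)) < ⊤} = 1 :=
    measure_tsum_lt_top_eq_one fun j => by fun_prop
  have h_iii_i (h : 0 < P {ω | (∑' j, ENNReal.ofReal ((Z j ω) ^ 2)) < ⊤}) :
      (∑' j, ∫⁻ ω, ENNReal.ofReal ((Z j ω) ^ 2) ∂P) < ⊤ := by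
    simpa only [lintegral_sq_eq_of_map_eq_gaussianReal (hZ _) (hv _)] using
      tsum_coe_lt_top_of_measure_tsum_sq_lt_top_pos hZ hv h
  exact ⟨⟨h_i_ii, fun h => h_iii_i (h ▸ one_pos)⟩,
    ⟨fun h => h ▸ one_pos, fun h => h_i_ii (h_iii_i h)⟩⟩
end

section
/- Let V be a real separable Hilbert space and X a V-valued random element (a Borel measurable map from a probability space into V) such that for every f ∈ V the real random variable ⟨X, f⟩ is Gaussian. Then E[‖X‖²] < ∞. -/
open MeasureTheory ProbabilityTheory
open scoped ENNReal NNReal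

/-! By the Riesz representation every continuous linear form on `V` is `⟪·, f⟫`, so the law of
`X` is a Gaussian measure on `V`, and Fernique's theorem gives it moments of all orders. -/

lemma hasGaussianLaw_of_forall_inner {V Ω : Type*} [NormedAddCommGroup V] [InnerProductSpace ℝ V]
    [CompleteSpace V] [MeasurableSpace V] [BorelSpace V] [MeasurableSpace Ω] {P : Measure Ω}
    {X : Ω → V} (hX : Measurable X)
    (hgauss : ∀ f : V, ∃ (m : ℝ) (v : ℝ≥0),
      P.map (fun ω => inner ℝ (X ω) f) = gaussianReal m v) :
    HasGaussianLaw X P := by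
  refine ⟨isGaussian_of_map_eq_gaussianReal fun L => ?_⟩
  have hL : (L ∘ X) = fun ω => inner ℝ (X ω) ((InnerProductSpace.toDual ℝ V).symm L) := by
    ext ω
    rw [Function.comp_apply, real_inner_comm, InnerProductSpace.toDual_symm_apply]
  rw [Measure.map_map L.continuous.measurable hX, hL]
  exact hgauss _

lemma MeasureTheory.MemLp.lintegral_nnnorm_sq_lt_top {α E : Type*} [MeasurableSpace α]
    {μ : Measure α} [NormedAddCommGroup E] {f : α → E} (hf : MemLp f 2 μ) :
    ∫⁻ a, (‖f a‖₊ : ℝ≥0∞) ^ 2 ∂μ < ∞ := by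
  simpa [enorm_eq_nnnorm] using
    lintegral_rpow_enorm_lt_top_of_eLpNorm_lt_top two_ne_zero ENNReal.ofNat_ne_top hf.eLpNorm_lt_top

theorem gaussian_hilbert_second_moment_finite_general
    {V : Type*} [NormedAddCommGroup V] [InnerProductSpace ℝ V] [CompleteSpace V]
    [TopologicalSpace.SeparableSpace V] [MeasurableSpace V] [BorelSpace V]
    {Ω : Type*} [MeasurableSpace Ω] (P : Measure Ω)
    (X : Ω → V) (hX : Measurable X)
    (hgauss : ∀ f : V, ∃ (m : ℝ) (v : ℝ≥0),
      P.map (fun ω => (inner ℝ (X ω) f : ℝ)) = gaussianReal m v) :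
    (∫⁻ ω, (‖X ω‖₊ : ℝ≥0∞) ^ 2 ∂P) < ⊤ := by
  have := UniformSpace.secondCountable_of_separable V
  exact (hasGaussianLaw_of_forall_inner hX hgauss).memLp_two.lintegral_nnnorm_sq_lt_top

/-- A Gaussian random element `X` of a real separable Hilbert space (i.e. `⟪X, f⟫` is a
(possibly degenerate) Gaussian real random variable for every `f`) has finite second moment:
`E[‖X‖²] < ∞`. -/
theorem gaussian_hilbert_second_moment_finite
    {V : Type*} [NormedAddCommGroup V] [InnerProductSpace ℝ V] [CompleteSpace V]
    [TopologicalSpace.SeparableSpace V] [MeasurableSpace V] [BorelSpace V]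
    {Ω : Type*} [MeasurableSpace Ω] (P : Measure Ω) [IsProbabilityMeasure P]
    (X : Ω → V) (hX : Measurable X)
    (hgauss : ∀ f : V, ∃ (m : ℝ) (v : ℝ≥0),
      P.map (fun ω => (inner ℝ (X ω) f : ℝ)) = gaussianReal m v) :
    (∫⁻ ω, (‖X ω‖₊ : ℝ≥0∞) ^ 2 ∂P) < ⊤ :=
  gaussian_hilbert_second_moment_finite_general P X hX hgauss
end
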